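/- For each Lyndon word l over the ordered alphabet Y (with y_1 > y_2 > ...), the polynomial Π_l is upper triangular and homogeneous in weight: Π_l = l + Σ_{v > l, (v) = (l)} c_v v, where (w) is the weight of w. -/

import Mathlib

open scoped BigOperators

/-- Words over the alphabet `Y = {y_s : s ≥ 1}`: a word is a list of positive integers. -/
abbrev Word : Type := List ℕ+

/-- The weight of a word `y_{i_1} ⋯ y_{i_r}` is `i_1 + ⋯ + i_r`. -/
def weight (w : Word) : ℕ := (w.map (fun s => (s : ℕ))).sum

/-- Noncommutative polynomials over `R` on the alphabet `Y`. -/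
abbrev NCPoly (R : Type) [CommRing R] : Type := Word →₀ R

variable {R : Type} [CommRing R]

/-- The `q`-stuffle product of two words, as a polynomial. -/
noncomputable def stuf (q : R) : Word → Word → NCPoly R
  | [], v => Finsupp.single v 1
  | u, [] => Finsupp.single u 1
  | s :: u, t :: v =>
      Finsupp.mapDomain (fun w => s :: w) (stuf q u (t :: v)) +
      Finsupp.mapDomain (fun w => t :: w) (stuf q (s :: u) v) +
      q • Finsupp.mapDomain (fun w => (s + t) :: w) (stuf q u v)
  termination_by u v => u.length + v.length
  decreasing_by all_goals (simp only [List.length_cons]; omega)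

/-- Bilinear extension of the `q`-stuffle product to polynomials. -/
noncomputable def stufP (q : R) (P Q : NCPoly R) : NCPoly R :=
  P.sum fun u a => Q.sum fun v b => (a * b) • stuf q u v

/-- Concatenation product of polynomials. -/
noncomputable def concP (P Q : NCPoly R) : NCPoly R :=
  P.sum fun u a => Q.sum fun v b => Finsupp.single (u ++ v) (a * b)

/-- Concatenation product of a list of polynomials. -/
noncomputable def concList : List (NCPoly R) → NCPoly R
  | [] => Finsupp.single [] 1
  | P :: L => concP P (concList L)

/-- `q`-stuffle product of a list of words. -/
noncomputable def stufList (q : R) : List Word → NCPoly R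
  | [] => Finsupp.single [] 1
  | u :: L => stufP q (Finsupp.single u 1) (stufList q L)

/-- A formal power series over `Y` is a function `Word → R`; `S w = ⟨S, w⟩`. -/
def unitS : Word → R := fun w => if w = [] then 1 else 0

/-- Pairing `⟨S, P⟩ = Σ_w ⟨S,w⟩⟨P,w⟩` between a series and a polynomial. -/
noncomputable def pairS (S : Word → R) (P : NCPoly R) : R := P.sum fun w c => c * S w

/-- Pairing between two polynomials. -/
noncomputable def pairP (P Q : NCPoly R) : R := Q.sum fun w c => c * P w

/-- The finite set of all words of weight `n`. -/
noncomputable def wordsOfWeight : ℕ → Finset Word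
  | 0 => {[]}
  | n + 1 =>
      (Finset.range (n + 1)).attach.biUnion fun i =>
        (wordsOfWeight i.1).image fun w => (n + 1 - i.1).toPNat' :: w
  termination_by n => n
  decreasing_by exact Finset.mem_range.mp i.2

/-- All words of weight at most `n`. -/
noncomputable def wordsUpTo (n : ℕ) : Finset Word := (Finset.range (n + 1)).biUnion wordsOfWeight

/-- The `q`-stuffle product of two formal power series (coefficient-wise, the sum
is finite since the `q`-stuffle preserves weight). -/
noncomputable def stufS (q : R) (S T : Word → R) : Word → R :=
  fun w => ∑ u ∈ wordsUpTo (weight w), ∑ v ∈ wordsUpTo (weight w),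
    S u * T v * (stuf q u v) w

/-- `q`-stuffle product of a list of series. -/
noncomputable def stufSList (q : R) (L : List (Word → R)) : Word → R :=
  L.foldr (stufS q) unitS

/-- All ways of writing a word as a concatenation of nonempty words. -/
noncomputable def splits : Word → Finset (List Word)
  | [] => {[]}
  | a :: v =>
      (Finset.range (v.length + 1)).attach.biUnion fun i =>
        (splits (v.drop i.1)).image fun L => (a :: v.take i.1) :: L
  termination_by w => w.length
  decreasing_by simp [List.length_drop] <;> omega

/-- Lists of length `n` with entries in the finite set `s`. -/
noncomputable def tuples (s : Finset Word) : ℕ → Finset (List Word)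
  | 0 => {[]}
  | n + 1 => s.biUnion fun u => (tuples s n).image fun L => u :: L

/-- The Eulerian-type projector `π₁` associated to the `q`-stuffle:
`π₁(w) = Σ_{k≥1} ((-1)^{k-1}/k) Σ_{u_1,…,u_k ∈ Y⁺} ⟨w | u_1 ⊛_q ⋯ ⊛_q u_k⟩ u_1⋯u_k`. -/
noncomputable def qpi1 [Algebra ℚ R] (q : R) (w : Word) : NCPoly R :=
  ∑ v ∈ wordsUpTo (weight w),
    Finsupp.single v
      (∑ n ∈ Finset.Icc 1 (weight w),
        ((-1 : ℚ) ^ (n - 1) / n) •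
          ∑ L ∈ (splits v).filter (fun L => L.length = n), (stufList q L) w)

/-- The adjoint projector `π̌₁`:
`π̌₁(w) = Σ_{k≥1} ((-1)^{k-1}/k) Σ_{u_1⋯u_k = w, u_i ∈ Y⁺} u_1 ⊛_q ⋯ ⊛_q u_k`. -/
noncomputable def qpi1Check [Algebra ℚ R] (q : R) (w : Word) : NCPoly R :=
  ∑ L ∈ splits w, ((-1 : ℚ) ^ (L.length - 1) / (L.length : ℚ)) • stufList q L

/-- `S` is primitive for the coproduct dual to the `q`-stuffle:
`Δ S = S ⊗ 1 + 1 ⊗ S`, read off on the coefficient at `u ⊗ v`. -/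
def IsPrimitive (q : R) (S : Word → R) : Prop :=
  ∀ u v : Word, pairS S (stuf q u v) =
    (if v = [] then S u else 0) + (if u = [] then S v else 0)

/-- `S` is group-like for the coproduct dual to the `q`-stuffle: `Δ S = S ⊗ S`. -/
def IsGroupLike (q : R) (S : Word → R) : Prop :=
  ∀ u v : Word, pairS S (stuf q u v) = S u * S v

/-- Concatenation (Cauchy) product of two series. -/
noncomputable def concS (S T : Word → R) : Word → R :=
  fun w => ∑ i ∈ Finset.range (w.length + 1), S (w.take i) * T (w.drop i)

/-- Concatenation powers of a series. -/
noncomputable def concPow (S : Word → R) : ℕ → Word → R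
  | 0 => unitS
  | n + 1 => concS S (concPow S n)

/-- Formal logarithm `log S = Σ_{n≥1} (-1)^{n-1} (S-1)^n / n` (for `S` with constant term 1,
the sum at a word `w` has at most `|w|` nonzero terms). -/
noncomputable def logS [Algebra ℚ R] (S : Word → R) : Word → R :=
  fun w => ∑ n ∈ Finset.Icc 1 w.length,
    ((-1 : ℚ) ^ (n - 1) / n) • concPow (S - unitS) n w

/-- The product on `R⟨⟨Y⟩⟩ ⊗^ R⟨⟨Y⟩⟩` where the left factor is multiplied by `⊛_q`
and the right factor by concatenation; a tensor is a function `Word → Word → R`. -/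
noncomputable def tmul (q : R) (A B : Word → Word → R) : Word → Word → R :=
  fun w w' => ∑ i ∈ Finset.range (w'.length + 1),
    stufS q (fun u => A u (w'.take i)) (fun u => B u (w'.drop i)) w

/-- The unit `1 ⊗ 1` of the tensor algebra. -/
def unitT : Word → Word → R := fun u v => if u = [] ∧ v = [] then 1 else 0

/-- Powers in the tensor algebra. -/
noncomputable def tpow (q : R) (A : Word → Word → R) : ℕ → Word → Word → R
  | 0 => unitT
  | n + 1 => tmul q A (tpow q A n)

/-- Formal logarithm in the tensor algebra. -/
noncomputable def logT [Algebra ℚ R] (q : R) (A : Word → Word → R) : Word → Word → R :=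
  fun w w' => ∑ n ∈ Finset.Icc 1 w'.length,
    ((-1 : ℚ) ^ (n - 1) / n) • tpow q (A - unitT) n w w'

/-- The diagonal series `D_Y = Σ_w w ⊗ w`. -/
def diagT : Word → Word → R := fun u v => if u = v then 1 else 0

/-- Order on words: lexicographic extension of the order `y_1 > y_2 > ⋯` on letters
(`wlt u v` means `u < v`). -/
def wlt (u v : Word) : Prop := List.Lex (fun a b : ℕ+ => b < a) u v

/-- A word is Lyndon if it is nonempty and strictly smaller than each of its proper suffixes. -/
def IsLyndon (w : Word) : Prop :=
  w ≠ [] ∧ ∀ i, 0 < i → i < w.length → wlt w (w.drop i)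

/-- Index of the standard factorization of a Lyndon word: the right factor is the
longest proper Lyndon suffix. -/
noncomputable def stdIdx (l : Word) : ℕ :=
  sInf {i | 0 < i ∧ i < l.length ∧ IsLyndon (l.drop i)}

/-- The family `Π_l`, for `l` a Lyndon word: `Π_{y_k} = π₁(y_k)`, and
`Π_l = [Π_s, Π_r]` for the standard factorization `l = (s, r)`. -/
noncomputable def PiL [Algebra ℚ R] (q : R) : Word → NCPoly R
  | [] => Finsupp.single [] 1
  | [s] => qpi1 q [s]
  | a :: b :: w =>
      if h : 0 < stdIdx (a :: b :: w) ∧ stdIdx (a :: b :: w) < (a :: b :: w).length then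
        concP (PiL q ((a :: b :: w).take (stdIdx (a :: b :: w))))
              (PiL q ((a :: b :: w).drop (stdIdx (a :: b :: w)))) -
        concP (PiL q ((a :: b :: w).drop (stdIdx (a :: b :: w))))
              (PiL q ((a :: b :: w).take (stdIdx (a :: b :: w))))
      else 0
  termination_by w => w.length
  decreasing_by all_goals (simp only [List.length_take, List.length_drop, List.length_cons] at h ⊢; omega)

/-- The Lyndon factorization of a word into a nonincreasing product of Lyndon words
(repeatedly take the longest Lyndon prefix). -/
noncomputable def lynFact : Word → List Word
  | [] => []
  | a :: w =>
      (a :: w).take (sSup {i | i ≤ w.length ∧ IsLyndon ((a :: w).take (i + 1))} + 1) ::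
      lynFact ((a :: w).drop (sSup {i | i ≤ w.length ∧ IsLyndon ((a :: w).take (i + 1))} + 1))
  termination_by w => w.length
  decreasing_by simp only [List.length_drop, List.length_cons]; omega

/-- The PBW-type basis: `Π_w = Π_{l_1} ⋯ Π_{l_n}` for the Lyndon factorization
`w = l_1 ⋯ l_n`, `l_1 ≥ ⋯ ≥ l_n`. -/
noncomputable def PiW [Algebra ℚ R] (q : R) (w : Word) : NCPoly R :=
  concList ((lynFact w).map (PiL q))

/-!
Induction along the standard factorization `l = s r`. Say `v` is graded-above `l` if `v` has the
weight of `l` and `l ≤ v` lexicographically. This is compatible with concatenation, and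
`u v = s r` with `u`, `v` graded-above `s`, `r` forces `u = s`, `v = r`, because words of equal
weight cannot be proper prefixes of one another. Hence if `Π_s`, `Π_r` are triangular with leading
words `s`, `r`, then `Π_s Π_r` is triangular with leading word `s r`, while `Π_r Π_s` lives on
words graded-above `r s`, which is strictly above `s r` because a Lyndon word is smaller than
its proper suffix `r`. Both factors are Lyndon, since `r` is the minimal proper suffix of `l`.
For a letter, `π₁(y_k)` lives on words of weight `k` because the `q`-stuffle preserves weight,
and every such word other than `y_k` begins with a letter `y_j`, `j < k`.
-/

/-- `wlt` is the strict order of the lexicographic linear order on `List ℕ+ᵒᵈ`. -/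
def lexKey (w : Word) : List ℕ+ᵒᵈ := w

section WordOrder

variable {u v w x y : Word}

theorem wlt_trans (h : wlt u v) (h' : wlt v w) : wlt u w :=
  lt_trans (α := List ℕ+ᵒᵈ) h h'

theorem wlt_irrefl (u : Word) : ¬ wlt u u := lt_irrefl (lexKey u)

theorem wlt_asymm (h : wlt u v) : ¬ wlt v u := lt_asymm (α := List ℕ+ᵒᵈ) h

theorem wlt_or_wlt_of_ne (h : u ≠ v) : wlt u v ∨ wlt v u := lt_or_gt_of_ne (α := List ℕ+ᵒᵈ) h

theorem wlt_append_left (c : Word) (h : wlt x y) : wlt (c ++ x) (c ++ y) :=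
  List.Lex.append_left _ h c

theorem wlt_append_right (c : Word) (h : wlt x y) : wlt x (y ++ c) :=
  List.Lex.append_right _ c h

theorem wlt_of_append_wlt_append_left (c : Word) (h : wlt (c ++ x) (c ++ y)) : wlt x y := by
  induction c with
  | nil => exact h
  | cons a c ih =>
    cases h with
    | rel h' => exact absurd h' (lt_irrefl a)
    | cons h' => exact ih h'

theorem isPrefix_or_forall_wlt_append (h : wlt x y) :
    x <+: y ∨ ∀ c c' : Word, wlt (x ++ c) (y ++ c') := by
  induction h with
  | nil => exact .inl List.nil_prefix
  | rel hab => exact .inr fun _ _ => List.Lex.rel hab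
  | cons _ ih =>
    exact ih.imp (fun hp => List.cons_prefix_cons.mpr ⟨rfl, hp⟩)
      fun h c c' => List.Lex.cons (h c c')

end WordOrder

section Weight

@[simp] theorem weight_nil : weight [] = 0 := rfl

@[simp] theorem weight_cons (a : ℕ+) (w : Word) : weight (a :: w) = a + weight w := by
  simp [weight]

@[simp] theorem weight_append (u v : Word) : weight (u ++ v) = weight u + weight v := by
  simp [weight]

theorem weight_pos {w : Word} (h : w ≠ []) : 0 < weight w := by
  obtain ⟨a, w, rfl⟩ := List.exists_cons_of_ne_nil h
  simp

theorem wlt_append_append_of_weight_eq {u u' : Word} (h : wlt u u') (hw : weight u = weight u')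
    (v v' : Word) : wlt (u ++ v) (u' ++ v') := by
  induction h with
  | nil => exact absurd hw (weight_pos (List.cons_ne_nil _ _)).ne
  | rel hab => exact List.Lex.rel hab
  | cons _ ih => exact List.Lex.cons (ih (by simpa using hw))

end Weight

def GradedLexLE (l v : Word) : Prop := weight v = weight l ∧ (v = l ∨ wlt l v)

namespace GradedLexLE

theorem wlt_append {s r u v : Word} (hu : GradedLexLE s u) (hv : GradedLexLE r v)
    (hne : u ≠ s ∨ v ≠ r) : wlt (s ++ r) (u ++ v) := by
  rcases hu.2 with rfl | hsu
  · rcases hv.2 with rfl | hrv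
    · simp at hne
    · exact wlt_append_left u hrv
  · exact wlt_append_append_of_weight_eq hsu hu.1.symm r v

theorem append {s r u v : Word} (hu : GradedLexLE s u) (hv : GradedLexLE r v) :
    GradedLexLE (s ++ r) (u ++ v) := by
  refine ⟨by simp [hu.1, hv.1], ?_⟩
  by_cases h : u = s ∧ v = r
  · exact .inl (by rw [h.1, h.2])
  · exact .inr (hu.wlt_append hv (not_and_or.mp h))

theorem eq_of_append_eq {s r u v : Word} (hu : GradedLexLE s u) (hv : GradedLexLE r v)
    (h : u ++ v = s ++ r) : u = s ∧ v = r := by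
  by_contra hne
  exact wlt_irrefl _ (h ▸ hu.wlt_append hv (not_and_or.mp hne))

end GradedLexLE

section Concatenation

variable {P Q : NCPoly R}

theorem concP_apply (P Q : NCPoly R) (w : Word) :
    concP P Q w = ∑ u ∈ P.support, ∑ v ∈ Q.support, if u ++ v = w then P u * Q v else 0 := by
  classical
  simp only [concP, Finsupp.sum, Finsupp.finsetSum_apply, Finsupp.single_apply]

theorem exists_of_concP_apply_ne_zero {w : Word} (h : concP P Q w ≠ 0) :
    ∃ u v, P u ≠ 0 ∧ Q v ≠ 0 ∧ u ++ v = w := by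
  rw [concP_apply] at h
  obtain ⟨u, hu, hsum⟩ := Finset.exists_ne_zero_of_sum_ne_zero h
  obtain ⟨v, hv, hterm⟩ := Finset.exists_ne_zero_of_sum_ne_zero hsum
  exact ⟨u, v, Finsupp.mem_support_iff.mp hu, Finsupp.mem_support_iff.mp hv,
    by_contra fun hne => hterm (if_neg hne)⟩

theorem concP_apply_append_of_unique {s r : Word}
    (h : ∀ u v, P u ≠ 0 → Q v ≠ 0 → u ++ v = s ++ r → u = s ∧ v = r) :
    concP P Q (s ++ r) = P s * Q r := by
  rw [concP_apply, Finset.sum_eq_single s, Finset.sum_eq_single r, if_pos rfl]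
  · exact fun v _ hvr => if_neg fun he => hvr (List.append_cancel_left he)
  · intro hr
    simp [Finsupp.notMem_support_iff.mp hr]
  · refine fun u hu hus => Finset.sum_eq_zero fun v hv => if_neg fun he => hus ?_
    exact (h u v (Finsupp.mem_support_iff.mp hu) (Finsupp.mem_support_iff.mp hv) he).1
  · intro hs
    simp [Finsupp.notMem_support_iff.mp hs]

end Concatenation

def IsTriangular (l : Word) (P : NCPoly R) : Prop :=
  P l = 1 ∧ ∀ v, P v ≠ 0 → GradedLexLE l v

namespace IsTriangular

variable {s r : Word} {P Q : NCPoly R}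

theorem concP (hP : IsTriangular s P) (hQ : IsTriangular r Q) :
    IsTriangular (s ++ r) (concP P Q) := by
  refine ⟨?_, fun w hw => ?_⟩
  · rw [concP_apply_append_of_unique, hP.1, hQ.1, one_mul]
    exact fun u v hu hv => (hP.2 u hu).eq_of_append_eq (hQ.2 v hv)
  · obtain ⟨u, v, hu, hv, rfl⟩ := exists_of_concP_apply_ne_zero hw
    exact (hP.2 u hu).append (hQ.2 v hv)

theorem sub_of_wlt (hP : IsTriangular s P) (hQ : IsTriangular r Q) (hsr : wlt s r)
    (hw : weight r = weight s) : IsTriangular s (P - Q) := by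
  have hQs : ∀ v, Q v ≠ 0 → weight v = weight s ∧ wlt s v := fun v hv =>
    ⟨(hQ.2 v hv).1.trans hw, by
      rcases (hQ.2 v hv).2 with rfl | hrv
      exacts [hsr, wlt_trans hsr hrv]⟩
  have hQs_zero : Q s = 0 := by_contra fun h => wlt_irrefl s (hQs s h).2
  refine ⟨by rw [Finsupp.sub_apply, hP.1, hQs_zero, sub_zero], fun v hv => ?_⟩
  by_cases hQv : Q v = 0
  · exact hP.2 v (by simpa [hQv] using hv)
  · exact ⟨(hQs v hQv).1, .inr (hQs v hQv).2⟩

end IsTriangular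

theorem Finsupp.exists_of_mapDomain_apply_ne_zero {α β M : Type*} [AddCommMonoid M]
    {f : α → β} {P : α →₀ M} {b : β} (h : Finsupp.mapDomain f P b ≠ 0) :
    ∃ a, P a ≠ 0 ∧ f a = b := by
  classical
  obtain ⟨a, ha, rfl⟩ :=
    Finset.mem_image.mp (Finsupp.mapDomain_support (Finsupp.mem_support_iff.mpr h))
  exact ⟨a, Finsupp.mem_support_iff.mp ha, rfl⟩

section Stuffle

variable (q : R)

theorem weight_of_stuf_apply_ne_zero (u v : Word) {w : Word} (h : stuf q u v w ≠ 0) :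
    weight w = weight u + weight v := by
  induction u, v using stuf.induct generalizing w with
  | case1 v =>
    rw [stuf, Finsupp.single_apply_ne_zero] at h
    simp [h.1]
  | case2 u hu =>
    rw [stuf.eq_2 q u hu, Finsupp.single_apply_ne_zero] at h
    simp [← h.1]
  | case3 s u t v ih₁ ih₂ ih₃ =>
    have weight_of_mapDomain_cons (a : ℕ+) (P : NCPoly R) (n : ℕ)
        (hP : ∀ w', P w' ≠ 0 → weight w' = n) (hw : Finsupp.mapDomain (a :: ·) P w ≠ 0) :
        weight w = a + n := by
      obtain ⟨w', hw', rfl⟩ := Finsupp.exists_of_mapDomain_apply_ne_zero hw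
      simp [hP w' hw']
    rw [stuf, Finsupp.add_apply, Finsupp.add_apply, Finsupp.smul_apply] at h
    by_cases h₁ : Finsupp.mapDomain (s :: ·) (stuf q u (t :: v)) w ≠ 0
    · rw [weight_of_mapDomain_cons s _ _ (fun _ => ih₁) h₁]
      simp only [weight_cons]
      ring
    by_cases h₂ : Finsupp.mapDomain (t :: ·) (stuf q (s :: u) v) w ≠ 0
    · rw [weight_of_mapDomain_cons t _ _ (fun _ => ih₂) h₂]
      simp only [weight_cons]
      ring
    have h₃ : Finsupp.mapDomain ((s + t) :: ·) (stuf q u v) w ≠ 0 := by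
      intro h₃
      simp_all
    rw [weight_of_mapDomain_cons _ _ _ (fun _ => ih₃) h₃]
    simp only [weight_cons, PNat.add_coe]
    ring

theorem exists_of_stufP_apply_ne_zero {P Q : NCPoly R} {w : Word} (h : stufP q P Q w ≠ 0) :
    ∃ u v, P u ≠ 0 ∧ Q v ≠ 0 ∧ stuf q u v w ≠ 0 := by
  rw [stufP, Finsupp.sum_apply, Finsupp.sum] at h
  obtain ⟨u, hu, hsum⟩ := Finset.exists_ne_zero_of_sum_ne_zero h
  rw [Finsupp.sum_apply, Finsupp.sum] at hsum
  obtain ⟨v, hv, hterm⟩ := Finset.exists_ne_zero_of_sum_ne_zero hsum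
  exact ⟨u, v, Finsupp.mem_support_iff.mp hu, Finsupp.mem_support_iff.mp hv,
    fun h0 => hterm (by rw [Finsupp.smul_apply, h0, smul_zero])⟩

theorem weight_of_stufList_apply_ne_zero (L : List Word) {w : Word} (h : stufList q L w ≠ 0) :
    weight w = weight L.flatten := by
  induction L generalizing w with
  | nil =>
    rw [stufList, Finsupp.single_apply_ne_zero] at h
    rw [h.1]
    rfl
  | cons u L ih =>
    obtain ⟨u', v, hu', hv, huv⟩ := exists_of_stufP_apply_ne_zero q h
    rw [Finsupp.single_apply_ne_zero] at hu'
    rw [weight_of_stuf_apply_ne_zero q u' v huv, ← hu'.1, ih hv, List.flatten_cons,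
      weight_append]

end Stuffle

theorem flatten_of_mem_splits {v : Word} {L : List Word} (h : L ∈ splits v) : L.flatten = v := by
  induction v using splits.induct generalizing L with
  | case1 =>
    rw [splits, Finset.mem_singleton] at h
    rw [h, List.flatten_nil]
  | case2 a v ih =>
    rw [splits, Finset.mem_biUnion] at h
    obtain ⟨i, -, hL⟩ := h
    obtain ⟨L', hL', rfl⟩ := Finset.mem_image.mp hL
    rw [List.flatten_cons, ih i hL', List.cons_append, List.take_append_drop]

theorem splits_singleton (k : ℕ+) : splits [k] = {[[k]]} := by
  ext L
  simp [splits]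

theorem stufList_singleton_singleton (q : R) (k : ℕ+) :
    stufList q [[k]] = Finsupp.single [k] 1 := by
  simp [stufList, stufP, stuf]

theorem mem_wordsUpTo_singleton (k : ℕ+) : [k] ∈ wordsUpTo k := by
  obtain ⟨n, rfl⟩ : ∃ n, k = n.succPNat := ⟨k.natPred, k.succPNat_natPred.symm⟩
  refine Finset.mem_biUnion.mpr ⟨n + 1, by simp, ?_⟩
  rw [wordsOfWeight]
  simp only [Finset.mem_biUnion, Finset.mem_image]
  exact ⟨⟨0, by simp⟩, Finset.mem_attach _ _, [], by simp [wordsOfWeight],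
    by simp [Nat.succPNat, Nat.toPNat']⟩

theorem gradedLexLE_singleton_of_weight_eq {k : ℕ+} {v : Word} (h : weight v = k) :
    GradedLexLE [k] v := by
  refine ⟨by simpa using h, ?_⟩
  obtain ⟨b, t, rfl⟩ := List.exists_cons_of_ne_nil fun hv : v = [] => by
    simp [hv] at h; exact k.ne_zero h.symm
  rw [weight_cons] at h
  rcases (PNat.coe_le_coe b k).mp (by omega) |>.lt_or_eq with hbk | rfl
  · exact .inr (List.Lex.rel hbk)
  · obtain rfl : t = [] := by_contra fun ht => by have := weight_pos ht; omega
    exact .inl rfl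

section Letter

variable [Algebra ℚ R] (q : R)

theorem qpi1_apply (w v : Word) :
    qpi1 q w v = if v ∈ wordsUpTo (weight w) then
      ∑ n ∈ Finset.Icc 1 (weight w), ((-1 : ℚ) ^ (n - 1) / n) •
        ∑ L ∈ (splits v).filter (fun L => L.length = n), stufList q L w else 0 := by
  classical
  rw [qpi1, Finsupp.finsetSum_apply]
  simp only [Finsupp.single_apply]
  exact Finset.sum_ite_eq' _ _ _

theorem weight_of_qpi1_apply_ne_zero {w v : Word} (h : qpi1 q w v ≠ 0) : weight v = weight w := by
  rw [qpi1_apply, ite_ne_right_iff] at h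
  obtain ⟨n, -, hn⟩ := Finset.exists_ne_zero_of_sum_ne_zero h.2
  obtain ⟨L, hL, hLw⟩ := Finset.exists_ne_zero_of_sum_ne_zero (right_ne_zero_of_smul hn)
  rw [weight_of_stufList_apply_ne_zero q L hLw, flatten_of_mem_splits (Finset.mem_filter.mp hL).1]

theorem qpi1_singleton_self (k : ℕ+) : qpi1 q [k] [k] = 1 := by
  have hk : weight [k] = k := by simp
  rw [qpi1_apply, if_pos (hk ▸ mem_wordsUpTo_singleton k),
    Finset.sum_eq_single_of_mem 1 (Finset.mem_Icc.mpr ⟨le_rfl, hk ▸ k.pos⟩)]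
  · simp [splits_singleton, Finset.filter_singleton, stufList_singleton_singleton]
  · intro n _ hn
    simp [splits_singleton, Finset.filter_singleton, Ne.symm hn]

theorem isTriangular_qpi1_singleton (k : ℕ+) : IsTriangular [k] (qpi1 q [k]) :=
  ⟨qpi1_singleton_self q k, fun _ hv =>
    gradedLexLE_singleton_of_weight_eq ((weight_of_qpi1_apply_ne_zero q hv).trans (by simp))⟩

end Letter

section Lyndon

variable {l : Word} {i : ℕ}

def IsMinSuffixIdx (l : Word) (i : ℕ) : Prop :=
  0 < i ∧ i < l.length ∧ ∀ j, 0 < j → j < l.length → j ≠ i → wlt (l.drop i) (l.drop j)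

theorem drop_ne_drop {j : ℕ} (hi : i ≤ l.length) (hj : j ≤ l.length) (h : i ≠ j) :
    l.drop i ≠ l.drop j := fun he => h (by have := congrArg List.length he; simp at this; omega)

theorem exists_isMinSuffixIdx (hl : 2 ≤ l.length) : ∃ i, IsMinSuffixIdx l i := by
  obtain ⟨i, hi, hmin⟩ := Finset.exists_min_image (Finset.Ioo 0 l.length)
    (fun i => lexKey (l.drop i)) ⟨1, by simp; omega⟩
  rw [Finset.mem_Ioo] at hi
  exact ⟨i, hi.1, hi.2, fun j hj0 hjl hji => lt_of_le_of_ne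
    (hmin j (Finset.mem_Ioo.mpr ⟨hj0, hjl⟩)) (drop_ne_drop hi.2.le hjl.le (Ne.symm hji))⟩

theorem IsMinSuffixIdx.isLyndon_drop (h : IsMinSuffixIdx l i) : IsLyndon (l.drop i) := by
  refine ⟨by simpa using h.2.1, fun t ht0 htl => ?_⟩
  rw [List.length_drop] at htl
  rw [List.drop_drop]
  exact h.2.2 (i + t) (by omega) (by omega) (by omega)

theorem IsMinSuffixIdx.stdIdx_eq (h : IsMinSuffixIdx l i) : stdIdx l = i := by
  refine IsLeast.csInf_eq ⟨⟨h.1, h.2.1, h.isLyndon_drop⟩, fun j ⟨hj0, hjl, hj⟩ =>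
    not_lt.mp fun hji => ?_⟩
  have hsuffix : wlt (l.drop j) (l.drop i) := by
    simpa [List.drop_drop, Nat.add_sub_cancel' hji.le] using
      hj.2 (i - j) (by omega) (by simp; have := h.2.1; omega)
  exact wlt_asymm hsuffix (h.2.2 j hj0 hjl hji.ne)

theorem IsLyndon.isLyndon_take (hl : IsLyndon l) (h : IsMinSuffixIdx l i) :
    IsLyndon (l.take i) := by
  obtain ⟨hi0, hil, hmin⟩ := h
  set s := l.take i
  set r := l.drop i
  have hs_len : s.length = i := List.length_take_of_le hil.le
  have hsr : s ++ r = l := List.take_append_drop i l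
  have hdrop (t : ℕ) (ht : t ≤ i) : s.drop t ++ r = l.drop t := by
    rw [← List.drop_append_of_le_length (hs_len ▸ ht), hsr]
  refine ⟨List.ne_nil_of_length_pos (hs_len ▸ hi0), fun t ht0 hts => by_contra fun hst => ?_⟩
  rw [hs_len] at hts
  have hlt : wlt (s.drop t) s := (wlt_or_wlt_of_ne
    (drop_ne_drop (l := s) (j := 0) (by omega) (by omega) ht0.ne')).resolve_right hst
  rcases isPrefix_or_forall_wlt_append hlt with ⟨z, hz⟩ | happ
  · -- `s = s.drop t ++ z`: then `z r` is a proper suffix of `l` both below and above `r`.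
    have hl_eq : l = s.drop t ++ (z ++ r) := by
      rw [← List.append_assoc, hz, hsr]
    have hzr : z ++ r = l.drop (i - t) := by
      have hlen : (s.drop t).length = i - t := by simp [hs_len]
      rw [← hlen, hl_eq, List.drop_left]
    have hzr_lt : wlt (z ++ r) r := wlt_of_append_wlt_append_left (s.drop t) <| by
      rw [← hl_eq, hdrop t hts.le]
      exact hl.2 t ht0 (by omega)
    exact wlt_asymm hzr_lt (hzr ▸ hmin (i - t) (by omega) (by omega) (by omega))
  · exact wlt_asymm (hl.2 t ht0 (by omega))
      (by simpa only [hdrop t hts.le, hsr] using happ r r)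

theorem IsLyndon.stdIdx_spec (hl : IsLyndon l) (h2 : 2 ≤ l.length) :
    0 < stdIdx l ∧ stdIdx l < l.length ∧
      IsLyndon (l.take (stdIdx l)) ∧ IsLyndon (l.drop (stdIdx l)) := by
  obtain ⟨i, hi⟩ := exists_isMinSuffixIdx h2
  rw [hi.stdIdx_eq]
  exact ⟨hi.1, hi.2.1, hl.isLyndon_take hi, hi.isLyndon_drop⟩

end Lyndon

theorem isTriangular_PiL [Algebra ℚ R] (q : R) {l : Word} (hl : IsLyndon l) :
    IsTriangular l (PiL q l) := by
  induction l using PiL.induct with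
  | case1 => exact absurd rfl hl.1
  | case2 k =>
    rw [PiL]
    exact isTriangular_qpi1_singleton q k
  | case3 a b w hidx ihs ihr =>
    set l := a :: b :: w
    set s := l.take (stdIdx l)
    set r := l.drop (stdIdx l)
    obtain ⟨-, -, hs, hr⟩ := hl.stdIdx_spec (by simp [l])
    have hsr : s ++ r = l := List.take_append_drop _ _
    have hlt : wlt (s ++ r) (r ++ s) := by
      rw [hsr]
      exact wlt_append_right s (hl.2 _ hidx.1 hidx.2)
    have key := ((ihs hs).concP (ihr hr)).sub_of_wlt ((ihr hr).concP (ihs hs)) hlt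
      (by rw [weight_append, weight_append, add_comm])
    rw [PiL, dif_pos hidx]
    rwa [hsr] at key
  | case4 a b w hidx =>
    obtain ⟨h0, hlen, -⟩ := hl.stdIdx_spec (by simp)
    exact absurd ⟨h0, hlen⟩ hidx

/-- For each Lyndon word `l` (alphabet ordered by `y_1 > y_2 > ⋯`),
`Π_l` is upper triangular and homogeneous in weight: `Π_l = l + Σ_{v > l, (v)=(l)} c_v v`. -/
theorem PiL_triangular [Algebra ℚ R] (q : R) (l : Word) (hl : IsLyndon l) :
    (PiL q l) l = 1 ∧
      ∀ v : Word, (PiL q l) v ≠ 0 → v ≠ l → (wlt l v ∧ weight v = weight l) := by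
  obtain ⟨hlead, hsupp⟩ := isTriangular_PiL q hl
  exact ⟨hlead, fun v hv hne => ⟨(hsupp v hv).2.resolve_left hne, (hsupp v hv).1⟩⟩
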